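/- arXiv:2507.21877 — 2 statements merged into one kernel-verified Lean document; each statement's English description precedes it below -/
import Mathlib

section
/- Let α be a well order and let s, t, u be finite sequences over α such that t is empty or begins with an element strictly below all elements of u. Then u * s ≤_s u * t implies s ≤_s t. -/
/-!
An embedding `f` witnessing `u ++ s ≤_s u ++ t` sends the `u`-part into the `u`-part: if `i` were
the first index of `u` with `f i ≥ |u|`, then position `|u|` would lie in the gap `(f (i - 1), f i]`,
forcing `u[i] ≤ t[0]`, against the hypothesis on the head of `t`. Restricted to the `s`-part and
shifted by `|u|`, `f` then witnesses `s ≤_s t`: the outer gap of `s[0]` in `t` lies inside the gap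
`(f (|u| - 1), f |u|]`, since `f` maps `u` below `|u|`.
-/

/-- The weak gap condition on finite sequences over a linear order. -/
def WeakGap {α : Type*} [LinearOrder α] (s t : List α) : Prop :=
  ∃ f : Fin s.length → Fin t.length,
    StrictMono f ∧
    (∀ i, s.get i ≤ t.get (f i)) ∧
    ∀ (i : ℕ) (h : i + 1 < s.length) (j : Fin t.length),
      f ⟨i, Nat.lt_of_succ_lt h⟩ < j → j < f ⟨i + 1, h⟩ → s.get ⟨i + 1, h⟩ ≤ t.get j

/-- The strong gap condition on finite sequences over a linear order:
as the weak one, but additionally respecting the outer gap. -/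
def StrongGap {α : Type*} [LinearOrder α] (s t : List α) : Prop :=
  ∃ f : Fin s.length → Fin t.length,
    StrictMono f ∧
    (∀ i, s.get i ≤ t.get (f i)) ∧
    (∀ (i : ℕ) (h : i + 1 < s.length) (j : Fin t.length),
      f ⟨i, Nat.lt_of_succ_lt h⟩ < j → j < f ⟨i + 1, h⟩ → s.get ⟨i + 1, h⟩ ≤ t.get j) ∧
    ∀ (h : 0 < s.length) (j : Fin t.length), j < f ⟨0, h⟩ → s.get ⟨0, h⟩ ≤ t.get j

theorem Fin.val_le_val_apply_of_strictMono {m n : ℕ} {f : Fin m → Fin n} (hf : StrictMono f)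
    (i : Fin m) : (i : ℕ) ≤ f i := by
  obtain ⟨i, hi⟩ := i
  induction i with
  | zero => exact Nat.zero_le _
  | succ k ih =>
    have hstep : f ⟨k, by omega⟩ < f ⟨k + 1, hi⟩ := hf (Fin.mk_lt_mk.2 k.lt_succ_self)
    have hk : k ≤ f ⟨k, by omega⟩ := ih (by omega)
    rw [Fin.lt_def] at hstep
    exact Nat.succ_le_of_lt (hk.trans_lt hstep)

theorem List.get_append_of_val_eq {α : Type*} {u s : List α} {k : Fin (u ++ s).length}
    {i : Fin s.length} (h : (k : ℕ) = u.length + i) : (u ++ s).get k = s.get i := by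
  obtain ⟨k, hk⟩ := k
  subst h
  simp

section

variable {α : Type*} [LinearOrder α]

/-- The pointwise, inner-gap and outer-gap clauses of `StrongGap` as one condition: `s[i] ≤ t[j]`
whenever `f (i - 1) < j ≤ f i` (whenever `j ≤ f 0`, for `i = 0`). -/
def IsStrongGapEmbedding (s t : List α) (f : Fin s.length → Fin t.length) : Prop :=
  StrictMono f ∧ ∀ i j, j ≤ f i → (∀ k < i, f k < j) → s.get i ≤ t.get j

theorem strongGap_iff_exists_isStrongGapEmbedding {s t : List α} :
    StrongGap s t ↔ ∃ f, IsStrongGapEmbedding s t f := by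
  constructor
  · rintro ⟨f, hmono, hle, hgap, houter⟩
    refine ⟨f, hmono, fun i j hj hlt => ?_⟩
    rcases hj.eq_or_lt with rfl | hj
    · exact hle i
    obtain ⟨_ | i, hi⟩ := i
    · exact houter hi j hj
    · exact hgap i hi j (hlt _ (Fin.mk_lt_mk.2 i.lt_succ_self)) hj
  · rintro ⟨f, hmono, hf⟩
    refine ⟨f, hmono, fun i => hf i _ le_rfl fun k hk => hmono hk,
      fun i hi j hj₁ hj₂ => hf _ j hj₂.le fun k hk => ?_,
      fun h j hj => hf _ j hj.le fun k hk => ?_⟩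
    · exact (hmono.monotone (Fin.le_def.2 (Nat.lt_succ_iff.1 hk))).trans_lt hj₁
    · exact absurd (Fin.lt_def.1 hk) (Nat.not_lt_zero _)

namespace IsStrongGapEmbedding

variable {u s t : List α} {f : Fin (u ++ s).length → Fin (u ++ t).length}

theorem val_lt_length_of_lt_length (hf : IsStrongGapEmbedding (u ++ s) (u ++ t) f)
    (hhead : ∀ a, t.head? = some a → ∀ b ∈ u, a < b) (i : Fin (u ++ s).length)
    (hi : (i : ℕ) < u.length) : (f i : ℕ) < u.length := by
  induction i using WellFoundedLT.induction with
  | _ i ih =>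
  by_contra! hge
  have hlen : u.length < (u ++ t).length := hge.trans_lt (f i).isLt
  obtain ⟨a, t, rfl⟩ := List.exists_cons_of_length_pos (by simpa using hlen)
  have hle := hf.2 i ⟨u.length, hlen⟩ hge fun k hk => ih k hk ((Fin.lt_def.1 hk).trans hi)
  simp only [List.get_eq_getElem, List.getElem_append_left hi, List.getElem_append_right le_rfl,
    Nat.sub_self, List.getElem_cons_zero] at hle
  exact (hhead a rfl _ (List.getElem_mem _)).not_ge hle

theorem exists_of_append (hf : IsStrongGapEmbedding (u ++ s) (u ++ t) f)
    (hprefix : ∀ i : Fin (u ++ s).length, (i : ℕ) < u.length → (f i : ℕ) < u.length) :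
    ∃ g, IsStrongGapEmbedding s t g := by
  obtain ⟨ι, hι⟩ : ∃ ι : Fin s.length → Fin (u ++ s).length, ∀ i, (ι i : ℕ) = u.length + i :=
    ⟨fun i => ⟨u.length + i, by simp⟩, fun _ => rfl⟩
  obtain ⟨κ, hκ⟩ : ∃ κ : Fin t.length → Fin (u ++ t).length, ∀ j, (κ j : ℕ) = u.length + j :=
    ⟨fun j => ⟨u.length + j, by simp⟩, fun _ => rfl⟩
  have hfι (i : Fin s.length) : u.length + i ≤ f (ι i) :=
    hι i ▸ Fin.val_le_val_apply_of_strictMono hf.1 (ι i)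
  obtain ⟨g, hg⟩ : ∃ g : Fin s.length → Fin t.length, ∀ i, u.length + g i = f (ι i) := by
    refine ⟨fun i => ⟨f (ι i) - u.length, ?_⟩, fun i => ?_⟩
    · have := (f (ι i)).isLt
      have := hfι i
      simp only [List.length_append] at *
      omega
    · have := hfι i
      dsimp only
      omega
  refine ⟨g, fun i i' hi => ?_, fun i j hj hlt => ?_⟩
  · have := hf.1 (show ι i < ι i' by rw [Fin.lt_def, hι, hι]; exact Nat.add_lt_add_left hi _)
    rw [Fin.lt_def, ← hg, ← hg] at this
    exact Fin.lt_def.2 (Nat.lt_of_add_lt_add_left this)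
  · rw [Fin.le_def] at hj
    have hle := hf.2 (ι i) (κ j) (by rw [Fin.le_def, hκ, ← hg]; omega) fun k hk => ?_
    · rwa [List.get_append_of_val_eq (hι i), List.get_append_of_val_eq (hκ j)] at hle
    rw [Fin.lt_def, hκ]
    by_cases hku : (k : ℕ) < u.length
    · exact (hprefix k hku).trans_le (Nat.le_add_right _ _)
    rw [Fin.lt_def, hι] at hk
    obtain ⟨k, rfl⟩ : ∃ k', ι k' = k :=
      ⟨⟨k - u.length, by omega⟩, Fin.ext (by rw [hι]; dsimp only; omega)⟩
    rw [hι] at hk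
    have := Fin.lt_def.1 (hlt k (Fin.lt_def.2 (Nat.lt_of_add_lt_add_left hk)))
    rw [← hg]
    omega

end IsStrongGapEmbedding

end

theorem strongGap_remove_head_general {α : Type*} [LinearOrder α]
    (s t u : List α)
    (hhead : ∀ a, t.head? = some a → ∀ b ∈ u, a < b) :
    StrongGap (u ++ s) (u ++ t) → StrongGap s t := by
  simp only [strongGap_iff_exists_isStrongGapEmbedding]
  rintro ⟨f, hf⟩
  exact hf.exists_of_append (hf.val_lt_length_of_lt_length hhead)

/-- Left cancellation for the strong gap condition. -/
theorem strongGap_remove_head {α : Type*} [LinearOrder α] [WellFoundedLT α]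
    (s t u : List α)
    (hhead : ∀ a, t.head? = some a → ∀ b ∈ u, a < b) :
    StrongGap (u ++ s) (u ++ t) → StrongGap s t :=
  strongGap_remove_head_general s t u hhead
end

section
/- For every natural number n there is a quasi-embedding from S^s_{n+1} into the product S^s_n ⊗ S^w_{n+1}, given by splitting a sequence s = s_l * s_r at the first occurrence of 0 (s_l the maximal prefix of positive members) and mapping s to (s_l with members decremented, s_r). -/
/-! A strong-gap embedding of `a :: s` into `t` amounts to a splitting `t = u ++ b :: v` in which
`a` lies below every member of `u ++ [b]`, together with a strong-gap embedding of `s` into `v`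
(`strongGap_cons_iff`); a weak-gap embedding is a strong-gap embedding into a suffix. In this form
strong-gap embeddings concatenate as soon as the head of the second source sequence lies below
everything skipped at the junction, and they can be pulled back along an order-reflecting map.
Since `s.dropWhile (· ≠ 0)` starts with `0`, and decrementing reflects the order on positive
numbers, a strong embedding of the prefixes and a weak embedding of the suffixes glue to a strong
embedding of `s` into `t`. -/

theorem List.ne_of_mem_takeWhile_ne {α : Type*} [DecidableEq α] {a x : α} {l : List α}
    (hx : x ∈ l.takeWhile (· ≠ a)) : x ≠ a := by
  simpa using List.mem_takeWhile_imp hx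

theorem List.eq_of_mem_head?_dropWhile_ne {α : Type*} [DecidableEq α] {a x : α} {l : List α}
    (hx : x ∈ (l.dropWhile (· ≠ a)).head?) : x = a := by
  have := List.head?_dropWhile_not (fun y => decide (y ≠ a)) l
  rw [Option.mem_def.1 hx] at this
  simpa using this

theorem List.getElem_append_cons_of_length_lt {α : Type*} {u v : List α} {b : α} {j : ℕ}
    (h : u.length < j) (hj : j < (u ++ b :: v).length) :
    (u ++ b :: v)[j] = v[j - u.length - 1]'(by simp at hj; omega) := by
  rw [List.getElem_append_right h.le]
  obtain ⟨k, hk⟩ : ∃ k, j - u.length = k + 1 := ⟨j - u.length - 1, by omega⟩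
  simp only [hk, List.getElem_cons_succ, Nat.add_sub_cancel]

variable {α β : Type*} [LinearOrder α] [LinearOrder β]

/-- `WeakGap s t` unfolds to `∃ f, IsGapEmbedding s t f`; `StrongGap s t` additionally bounds the
members of `t` before the image of the first member of `s`. -/
def IsGapEmbedding (s t : List α) (f : Fin s.length → Fin t.length) : Prop :=
  StrictMono f ∧ (∀ i, s.get i ≤ t.get (f i)) ∧
    ∀ (i : ℕ) (h : i + 1 < s.length) (j : Fin t.length),
      f ⟨i, Nat.lt_of_succ_lt h⟩ < j → j < f ⟨i + 1, h⟩ → s.get ⟨i + 1, h⟩ ≤ t.get j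

variable {s t : List α}

namespace IsGapEmbedding

theorem tail {a : α} {f : Fin (s.length + 1) → Fin t.length} (hf : IsGapEmbedding (a :: s) t f) :
    IsGapEmbedding s t (f ∘ Fin.succ) :=
  ⟨hf.1.comp Fin.strictMono_succ, fun i => hf.2.1 i.succ,
    fun i h j h₁ h₂ => hf.2.2 (i + 1) (by simpa using h) j h₁ h₂⟩

theorem strongGap_drop {f : Fin s.length → Fin t.length} (hf : IsGapEmbedding s t f) {k : ℕ}
    (hk : ∀ i, k ≤ f i)
    (hfirst : ∀ (h : 0 < s.length) (j : Fin t.length), k ≤ j → j < f ⟨0, h⟩ →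
      s.get ⟨0, h⟩ ≤ t.get j) :
    StrongGap s (t.drop k) := by
  obtain ⟨mono, le, gap⟩ := hf
  have hlt (i) : (f i : ℕ) - k < (t.drop k).length := by
    have := (f i).isLt; have := hk i; simp only [List.length_drop]; omega
  have hget (j : Fin (t.drop k).length) :
      (t.drop k).get j =
        t.get ⟨k + j, by have := j.isLt; simp only [List.length_drop] at this; omega⟩ :=
    List.getElem_drop
  refine ⟨fun i => ⟨f i - k, hlt i⟩, fun i j hij => ?_, fun i => ?_, fun i h j h₁ h₂ => ?_,
    fun h j hj => ?_⟩
  · have := mono hij; have := hk i; simp only [Fin.lt_def] at *; omega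
  · rw [hget]; convert le i using 3; simp [hk i]
  · have := hk ⟨i, by omega⟩; have := hk ⟨i + 1, h⟩
    rw [hget]
    refine gap i h _ ?_ ?_ <;> simp only [Fin.lt_def] at h₁ h₂ ⊢ <;> omega
  · have := hk ⟨0, h⟩
    rw [hget]
    refine hfirst h _ (by simp) ?_
    simp only [Fin.lt_def] at hj ⊢
    omega

end IsGapEmbedding

theorem strongGap_nil (t : List α) : StrongGap [] t :=
  ⟨Fin.elim0, fun i => i.elim0, fun i => i.elim0, fun _ h => absurd h (by simp),
    fun h => absurd h (by simp)⟩

theorem StrongGap.cons {a b : α} {u v : List α} (h : StrongGap s v) (hu : ∀ y ∈ u, a ≤ y)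
    (hab : a ≤ b) : StrongGap (a :: s) (u ++ b :: v) := by
  obtain ⟨g, mono, le, gap, first⟩ := h
  have hlen : (u ++ b :: v).length = u.length + 1 + v.length := by simp; omega
  refine ⟨Fin.cons ⟨u.length, by omega⟩ fun i => ⟨u.length + 1 + g i, by omega⟩,
    Fin.strictMono_cons.2 ⟨fun i => ?_, fun i j hij => ?_⟩, fun i => ?_, fun i h j h₁ h₂ => ?_,
    fun _ j hj => ?_⟩
  · simp only [Fin.lt_def]; omega
  · have := mono hij; simp only [Fin.lt_def] at this ⊢; omega
  · cases i using Fin.cases with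
    | zero => simpa using hab
    | succ i =>
      have hj : u.length < u.length + 1 + g i := by omega
      have hidx : u.length + 1 + (g i : ℕ) - u.length - 1 = g i := by omega
      simpa [List.getElem_append_cons_of_length_lt hj, hidx] using le i
  · rcases i with _ | i
    · have h₁' : u.length < j := h₁
      have h₂' : (j : ℕ) < u.length + 1 + g ⟨0, by simpa using h⟩ := h₂
      simp only [List.get_eq_getElem, List.getElem_append_cons_of_length_lt h₁']
      exact first _ ⟨j - u.length - 1, by omega⟩ (Fin.mk_lt_of_lt_val (by omega))
    · have h₁' : u.length + 1 + (g ⟨i, by simp at h; omega⟩ : ℕ) < j := h₁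
      have h₂' : (j : ℕ) < u.length + 1 + g ⟨i + 1, by simpa using h⟩ := h₂
      simp only [List.get_eq_getElem,
        List.getElem_append_cons_of_length_lt (show u.length < j by omega)]
      exact gap i _ ⟨j - u.length - 1, by omega⟩ (Fin.lt_def.2 (by dsimp only; omega))
        (Fin.mk_lt_of_lt_val (by omega))
  · have hj' : (j : ℕ) < u.length := hj
    simpa [List.getElem_append_left hj'] using hu _ (List.getElem_mem hj')

theorem strongGap_cons_iff {a : α} :
    StrongGap (a :: s) t ↔
      ∃ u b v, t = u ++ b :: v ∧ (∀ y ∈ u, a ≤ y) ∧ a ≤ b ∧ StrongGap s v := by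
  refine ⟨fun ⟨f, mono, le, gap, first⟩ => ?_,
    fun ⟨u, b, v, ht, hu, hab, hs⟩ => ht ▸ hs.cons hu hab⟩
  refine ⟨t.take (f 0), t[(f 0 : ℕ)], t.drop (f 0 + 1), ?_, fun y hy => ?_, le 0, ?_⟩
  · rw [List.getElem_cons_drop, List.take_append_drop]
  · obtain ⟨j, hj, rfl⟩ := List.mem_take_iff_getElem.1 hy
    exact first (by simp) ⟨j, by omega⟩ (by simp [Fin.lt_def]; omega)
  · exact IsGapEmbedding.strongGap_drop (IsGapEmbedding.tail ⟨mono, le, gap⟩)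
      (fun i => mono (Fin.succ_pos i)) fun h j h₁ h₂ =>
        gap 0 (by simpa using h) j (Fin.lt_def.2 h₁) h₂

theorem WeakGap.exists_append_strongGap (h : WeakGap s t) : ∃ u v, t = u ++ v ∧ StrongGap s v := by
  cases s with
  | nil => exact ⟨[], t, rfl, strongGap_nil t⟩
  | cons a s =>
    obtain ⟨f, hf⟩ := h
    exact ⟨t.take (f 0), t.drop (f 0), (List.take_append_drop _ _).symm,
      IsGapEmbedding.strongGap_drop hf (fun i => hf.1.monotone (Fin.zero_le i))
        fun _ _ h₁ h₂ => absurd h₂ (not_lt.2 h₁)⟩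

theorem StrongGap.append_right (h : StrongGap s t) (w : List α) : StrongGap s (t ++ w) := by
  induction s generalizing t with
  | nil => exact strongGap_nil _
  | cons a s ih =>
    obtain ⟨u, b, v, rfl, hu, hab, hs⟩ := strongGap_cons_iff.1 h
    exact strongGap_cons_iff.2 ⟨u, b, v ++ w, by simp, hu, hab, ih hs⟩

theorem StrongGap.append_left {u : List α} (h : StrongGap s t)
    (hu : ∀ x ∈ s.head?, ∀ y ∈ u, x ≤ y) : StrongGap s (u ++ t) := by
  cases s with
  | nil => exact strongGap_nil _
  | cons a s =>
    obtain ⟨u', b, v, rfl, hu', hab, hs⟩ := strongGap_cons_iff.1 h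
    refine strongGap_cons_iff.2 ⟨u ++ u', b, v, by simp, fun y hy => ?_, hab, hs⟩
    rcases List.mem_append.1 hy with hy | hy
    exacts [hu a rfl y hy, hu' y hy]

theorem StrongGap.append {s₁ s₂ t₁ t₂ : List α} (h₁ : StrongGap s₁ t₁) (h₂ : StrongGap s₂ t₂)
    (h : ∀ x ∈ s₂.head?, ∀ y ∈ t₁, x ≤ y) : StrongGap (s₁ ++ s₂) (t₁ ++ t₂) := by
  induction s₁ generalizing t₁ with
  | nil => exact h₂.append_left h
  | cons a s₁ ih =>
    obtain ⟨u, b, v, rfl, hu, hab, hs⟩ := strongGap_cons_iff.1 h₁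
    exact strongGap_cons_iff.2 ⟨u, b, v ++ t₂, by simp, hu, hab,
      ih hs fun x hx y hy => h x hx y (by simp [hy])⟩

theorem StrongGap.append_weakGap {s₁ s₂ t₁ t₂ : List α} (h₁ : StrongGap s₁ t₁)
    (h₂ : WeakGap s₂ t₂) (h : ∀ x ∈ s₂.head?, ∀ y ∈ t₁ ++ t₂, x ≤ y) :
    StrongGap (s₁ ++ s₂) (t₁ ++ t₂) := by
  obtain ⟨u, v, rfl, hv⟩ := h₂.exists_append_strongGap
  rw [← List.append_assoc]
  exact (h₁.append_right u).append hv fun x hx y hy =>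
    h x hx y (by simp only [List.mem_append] at hy ⊢; tauto)

theorem StrongGap.of_map (φ : α → β) (hφ : ∀ x ∈ s, ∀ y ∈ t, φ x ≤ φ y → x ≤ y)
    (h : StrongGap (s.map φ) (t.map φ)) : StrongGap s t := by
  induction s generalizing t with
  | nil => exact strongGap_nil t
  | cons a s ih =>
    obtain ⟨u, b, v, ht, hu, hab, hs⟩ := strongGap_cons_iff.1 h
    obtain ⟨u', l, rfl, rfl, hl⟩ := List.map_eq_append_iff.1 ht
    obtain ⟨b', v', rfl, rfl, rfl⟩ := List.map_eq_cons_iff.1 hl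
    refine strongGap_cons_iff.2 ⟨u', b', v', rfl, fun y hy => ?_, hφ _ (by simp) _ (by simp) hab,
      ih (fun x hx y hy => hφ x (by simp [hx]) y (by simp [hy])) hs⟩
    exact hφ a (by simp) y (by simp [hy]) (hu _ (List.mem_map_of_mem hy))

/-- Splitting a sequence over `{0, …, n}` at the first occurrence of `0` and
decrementing the members of the prefix yields a quasi-embedding from
`S^s_{n+1}` into the product `S^s_n ⊗ S^w_{n+1}`. -/
theorem strongGap_quasiEmbeds_into_product (n : ℕ) :
    (∀ s : List ℕ, (∀ x ∈ s, x < n + 1) →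
      ∀ x ∈ (s.takeWhile (· ≠ 0)).map (· - 1), x < n) ∧
    (∀ s t : List ℕ, (∀ x ∈ s, x < n + 1) → (∀ x ∈ t, x < n + 1) →
      StrongGap ((s.takeWhile (· ≠ 0)).map (· - 1))
          ((t.takeWhile (· ≠ 0)).map (· - 1)) →
        WeakGap (s.dropWhile (· ≠ 0)) (t.dropWhile (· ≠ 0)) →
          StrongGap s t) := by
  refine ⟨fun s hs x hx => ?_, fun s t _ _ hpre hsuf => ?_⟩
  · obtain ⟨y, hy, rfl⟩ := List.mem_map.1 hx
    have := hs y ((List.takeWhile_prefix _).subset hy)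
    have := List.ne_of_mem_takeWhile_ne hy
    omega
  · rw [← List.takeWhile_append_dropWhile (l := s) (p := (· ≠ 0)),
      ← List.takeWhile_append_dropWhile (l := t) (p := (· ≠ 0))]
    refine (hpre.of_map _ fun x hx y hy hxy => ?_).append_weakGap hsuf fun x hx y _ => ?_
    · have := List.ne_of_mem_takeWhile_ne hx
      have := List.ne_of_mem_takeWhile_ne hy
      omega
    · exact (List.eq_of_mem_head?_dropWhile_ne hx).symm ▸ Nat.zero_le y
end
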